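/- For any two finite graphs G and H, the routing number of the Cartesian product satisfies rt(G □ H) ≤ 2·rt(G) + rt(H). -/

import Mathlib

/-!
Write `τ` on `V × W` as `L₃ * R₂ * L₁`, where `L₁, L₃` permute inside every copy `V × {w}` of `G`
and `R₂` inside every copy `{v} × W` of `H`; each factor is routed in all copies at once, so
`2 rt(G) + rt(H)` rounds suffice. The factorisation is König's theorem: the multigraph on two
copies of `W` with an edge `p.2 — (τ p).2` for every pebble `p` is `|V|`-regular and bipartite, so
its edges split into `|V|` perfect matchings (Hall); the index of its matching becomes the
intermediate first coordinate of `p`.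

If `G □ H` is disconnected no `k` routes it and its routing number is the junk value `sInf ∅ = 0`;
otherwise `G` and `H` are connected, hence routable, and their routing numbers are attained.
-/

/-- A routing step in a graph: an involution of the vertices each of whose
non-fixed points is swapped with a neighbour (a matching). -/
def IsRoutingStep {V : Type*} (G : SimpleGraph V) (m : Equiv.Perm V) : Prop :=
  (∀ v, m (m v) = v) ∧ ∀ v, m v = v ∨ G.Adj v (m v)

/-- Every permutation of the vertices of `G` can be realised by `k` rounds of
swaps along matchings. -/
def RoutableIn {V : Type*} (G : SimpleGraph V) (k : ℕ) : Prop :=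
  ∀ τ : Equiv.Perm V, ∃ ms : Fin k → Equiv.Perm V,
    (∀ i, IsRoutingStep G (ms i)) ∧
    ∀ v, τ v = (List.ofFn fun i => ⇑(ms i)).foldl (fun g h => h ∘ g) id v

/-- The routing number of a graph. -/
noncomputable def routingNumber {V : Type*} (G : SimpleGraph V) : ℕ :=
  sInf {k | RoutableIn G k}

open Equiv Function

section Routes

variable {V : Type*} {G : SimpleGraph V}

/-- In `τ * m` the step `m` is applied first, as in the left-to-right order of `RoutableIn`. -/
inductive RoutesIn (G : SimpleGraph V) : ℕ → Perm V → Prop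
  | refl : RoutesIn G 0 1
  | step {k : ℕ} {m τ : Perm V} : IsRoutingStep G m → RoutesIn G k τ → RoutesIn G (k + 1) (τ * m)

lemma routesIn_zero_iff {τ : Perm V} : RoutesIn G 0 τ ↔ τ = 1 :=
  ⟨by rintro ⟨⟩; rfl, by rintro rfl; exact .refl⟩

lemma routesIn_succ_iff {k : ℕ} {σ : Perm V} :
    RoutesIn G (k + 1) σ ↔ ∃ m τ, IsRoutingStep G m ∧ RoutesIn G k τ ∧ σ = τ * m :=
  ⟨by rintro ⟨⟩; exact ⟨_, _, ‹_›, ‹_›, rfl⟩, by rintro ⟨m, τ, hm, hτ, rfl⟩; exact hτ.step hm⟩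

lemma RoutesIn.mul {k l : ℕ} {σ τ : Perm V} (hσ : RoutesIn G k σ) (hτ : RoutesIn G l τ) :
    RoutesIn G (k + l) (σ * τ) := by
  induction hτ with
  | refl => simpa using hσ
  | step hm _ ih => rw [← mul_assoc]; exact ih.step hm

lemma isRoutingStep_one : IsRoutingStep G 1 := ⟨fun _ => rfl, fun _ => Or.inl rfl⟩

lemma routesIn_one (k : ℕ) : RoutesIn G k 1 := by
  induction k with
  | zero => exact .refl
  | succ k ih => simpa using ih.step isRoutingStep_one

lemma RoutesIn.mono {k l : ℕ} {τ : Perm V} (hτ : RoutesIn G k τ) (hkl : k ≤ l) :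
    RoutesIn G l τ := by
  obtain ⟨d, rfl⟩ := Nat.exists_eq_add_of_le hkl
  simpa using hτ.mul (routesIn_one d)

lemma foldl_comp_eq_comp {α : Type*} (l : List (α → α)) (F : α → α) :
    l.foldl (fun g h => h ∘ g) F = l.foldl (fun g h => h ∘ g) id ∘ F := by
  induction l generalizing F with
  | nil => rfl
  | cons h l ih => simp only [List.foldl_cons, ih (h ∘ F), ih (h ∘ id)]; rfl

lemma foldl_comp_cons {α : Type*} (f : α → α) (l : List (α → α)) :
    (f :: l).foldl (fun g h => h ∘ g) id = l.foldl (fun g h => h ∘ g) id ∘ f :=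
  foldl_comp_eq_comp l (f ∘ id)

lemma routesIn_iff_exists {k : ℕ} {τ : Perm V} :
    RoutesIn G k τ ↔ ∃ ms : Fin k → Perm V, (∀ i, IsRoutingStep G (ms i)) ∧
      ⇑τ = (List.ofFn fun i => ⇑(ms i)).foldl (fun g h => h ∘ g) id := by
  induction k generalizing τ with
  | zero => simp [routesIn_zero_iff, ← Perm.coe_one, DFunLike.coe_fn_eq]
  | succ k ih =>
    simp only [List.ofFn_succ, foldl_comp_cons]
    constructor
    · rw [routesIn_succ_iff]
      rintro ⟨m, τ', hm, hτ', rfl⟩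
      obtain ⟨ms, hms, hτ'ms⟩ := ih.1 hτ'
      refine ⟨Fin.cons m ms, Fin.cases hm hms, ?_⟩
      simp [hτ'ms]
    · rintro ⟨ms, hms, hτms⟩
      have h := (ih (τ := τ * (ms 0)⁻¹)).2 ⟨fun i => ms i.succ, fun i => hms i.succ, by
        rw [Perm.coe_mul, hτms]; ext v; simp⟩
      simpa using h.step (hms 0)

lemma routableIn_iff_forall_routesIn {k : ℕ} : RoutableIn G k ↔ ∀ τ, RoutesIn G k τ := by
  simp only [RoutableIn, routesIn_iff_exists, funext_iff]

variable {V' : Type*} {G' : SimpleGraph V'} {f : V ≃ V'}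

lemma IsRoutingStep.permCongr (hf : ∀ {a b}, G.Adj a b → G'.Adj (f a) (f b)) {m : Perm V}
    (hm : IsRoutingStep G m) : IsRoutingStep G' (f.permCongr m) := by
  refine ⟨fun v => by simp [hm.1], fun v => ?_⟩
  rcases hm.2 (f.symm v) with h | h
  · exact Or.inl (by simp [h])
  · exact Or.inr (by simpa using hf h)

lemma RoutesIn.permCongr (hf : ∀ {a b}, G.Adj a b → G'.Adj (f a) (f b)) {k : ℕ} {τ : Perm V}
    (hτ : RoutesIn G k τ) : RoutesIn G' k (f.permCongr τ) := by
  induction hτ with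
  | refl => exact routesIn_zero_iff.2 (by ext; simp)
  | step hm _ ih => rw [permCongr_mul]; exact ih.step (hm.permCongr hf)

end Routes

section Connectivity

variable {V : Type*} {G : SimpleGraph V}

lemma RoutesIn.reachable {k : ℕ} {τ : Perm V} (hτ : RoutesIn G k τ) (v : V) :
    G.Reachable v (τ v) := by
  induction hτ generalizing v with
  | refl => rfl
  | @step k m τ hm _ ih =>
    have hvm : G.Reachable v (m v) := (hm.2 v).elim (fun h => by rw [h]) (·.reachable)
    exact hvm.trans (ih (m v))

lemma RoutableIn.preconnected {k : ℕ} (h : RoutableIn G k) : G.Preconnected := by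
  classical
  intro u v
  simpa using (routableIn_iff_forall_routesIn.1 h (swap u v)).reachable u

lemma isRoutingStep_swap [DecidableEq V] {u v : V} (h : G.Adj u v) :
    IsRoutingStep G (swap u v) := by
  refine ⟨swap_apply_self u v, fun x => ?_⟩
  rcases eq_or_ne x u with rfl | hu
  · simpa using Or.inr h
  rcases eq_or_ne x v with rfl | hv
  · simpa using Or.inr h.symm
  · exact Or.inl (swap_apply_of_ne_of_ne hu hv)

lemma exists_routesIn_swap [DecidableEq V] {u v : V} (h : G.Reachable u v) :
    ∃ k, RoutesIn G k (swap u v) := by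
  obtain ⟨p⟩ := h
  induction p with
  | nil => exact ⟨0, by rw [swap_self]; exact .refl⟩
  | @cons a b c hab p ih =>
    have hstep : RoutesIn G 1 (swap a b) := by
      simpa using RoutesIn.refl.step (isRoutingStep_swap hab)
    rcases eq_or_ne a c with rfl | hac
    · exact ⟨0, by rw [swap_self]; exact .refl⟩
    rcases eq_or_ne b c with rfl | hbc
    · exact ⟨1, hstep⟩
    obtain ⟨k, hk⟩ := ih
    -- conjugating `swap b c` by the edge swap `swap a b` moves the pebble exchange to `a, c`
    have hconj : swap a b * swap b c * swap a b = swap a c := by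
      rw [swap_comm a b, swap_comm b c, swap_mul_swap_mul_swap hbc.symm (Ne.symm hac), swap_comm]
    exact ⟨_, hconj ▸ (hstep.mul hk).mul hstep⟩

lemma exists_routesIn_of_preconnected [Finite V] (hG : G.Preconnected) (τ : Perm V) :
    ∃ k, RoutesIn G k τ := by
  classical
  induction τ using Perm.swap_induction_on with
  | one => exact ⟨0, .refl⟩
  | swap_mul f x y _ ih =>
    obtain ⟨k, hk⟩ := ih
    obtain ⟨l, hl⟩ := exists_routesIn_swap (hG x y)
    exact ⟨_, hl.mul hk⟩

lemma SimpleGraph.Preconnected.exists_routableIn [Finite V] (hG : G.Preconnected) :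
    ∃ k, RoutableIn G k := by
  choose K hK using exists_routesIn_of_preconnected hG
  obtain ⟨k, hk⟩ := (Set.finite_range K).bddAbove
  exact ⟨k, routableIn_iff_forall_routesIn.2 fun τ => (hK τ).mono (hk ⟨τ, rfl⟩)⟩

lemma routableIn_routingNumber [Finite V] (hG : G.Preconnected) :
    RoutableIn G (routingNumber G) :=
  Nat.sInf_mem hG.exists_routableIn

end Connectivity

section BoxProduct

variable {V W : Type*} {G : SimpleGraph V} {H : SimpleGraph W}

lemma isRoutingStep_prodCongrRight {m : V → Perm W} (hm : ∀ v, IsRoutingStep H (m v)) :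
    IsRoutingStep (G □ H) (prodCongrRight m) := by
  refine ⟨fun ⟨v, w⟩ => by simp [(hm v).1], fun ⟨v, w⟩ => ?_⟩
  rcases (hm v).2 w with h | h
  · exact Or.inl (by simp [h])
  · exact Or.inr (SimpleGraph.boxProd_adj.2 (Or.inr ⟨by simpa using h, rfl⟩))

lemma routesIn_prodCongrRight {k : ℕ} {e : V → Perm W} (he : ∀ v, RoutesIn H k (e v)) :
    RoutesIn (G □ H) k (prodCongrRight e) := by
  induction k generalizing e with
  | zero =>
    obtain rfl : e = 1 := funext fun v => routesIn_zero_iff.1 (he v)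
    exact routesIn_zero_iff.2 (by ext ⟨v, w⟩ <;> simp)
  | succ k ih =>
    choose m τ hm hτ hτm using fun v => routesIn_succ_iff.1 (he v)
    have hsplit : prodCongrRight e = prodCongrRight τ * prodCongrRight m := by
      ext ⟨v, w⟩ <;> simp [hτm]
    exact hsplit ▸ (ih hτ).step (isRoutingStep_prodCongrRight hm)

lemma routesIn_prodCongrLeft {k : ℕ} {e : W → Perm V} (he : ∀ w, RoutesIn G k (e w)) :
    RoutesIn (G □ H) k (prodCongrLeft e) := by
  have h := (routesIn_prodCongrRight (G := H) he).permCongr (f := prodComm W V)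
    (SimpleGraph.boxProdComm H G).map_adj_iff.2
  convert h using 1
  ext ⟨v, w⟩ <;> rfl

end BoxProduct

section EdgeColouring

open Finset

/-! A finset `S : Finset α` together with `s t : α → β` is read as a bipartite multigraph on two
copies of `β`, the edge `x ∈ S` joining `s x` to `t x`. -/

variable {α β : Type*} [DecidableEq β] {S M : Finset α} {s t : α → β} {n : ℕ}

lemma card_filter_mem_eq_mul (hs : ∀ b, #{x ∈ S | s x = b} = n) (T : Finset β) :
    #{x ∈ S | s x ∈ T} = n * #T := by
  rw [card_eq_sum_card_fiberwise (s := {x ∈ S | s x ∈ T}) (t := T) fun x hx => (mem_filter.1 hx).2,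
    sum_congr rfl fun b hb => ?_, sum_const, smul_eq_mul, mul_comm]
  rw [filter_filter, ← hs b]
  congr 1
  exact filter_congr fun x _ => ⟨And.right, fun h => ⟨h ▸ hb, h⟩⟩

lemma exists_perfectMatching_of_regular [Fintype β] (hn : n ≠ 0) (hs : ∀ b, #{x ∈ S | s x = b} = n)
    (ht : ∀ b, #{x ∈ S | t x = b} = n) :
    ∃ M ⊆ S, (∀ b, #{x ∈ M | s x = b} = 1) ∧ ∀ b, #{x ∈ M | t x = b} = 1 := by
  classical
  -- Hall's condition: the `n * #T` edges leaving `T` end in the neighbourhood of `T`, which they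
  -- reach `n` per vertex
  have hall : ∀ T : Finset β, #T ≤ #(T.biUnion fun b => {x ∈ S | s x = b}.image t) := by
    intro T
    have hsub : {x ∈ S | s x ∈ T} ⊆ {x ∈ S | t x ∈ T.biUnion fun b => {x ∈ S | s x = b}.image t} :=
      fun x hx => by
        simp only [mem_filter, mem_biUnion, mem_image] at hx ⊢
        exact ⟨hx.1, s x, hx.2, x, ⟨hx.1, rfl⟩, rfl⟩
    have := card_le_card hsub
    rwa [card_filter_mem_eq_mul hs, card_filter_mem_eq_mul ht,
      Nat.mul_le_mul_left_iff (Nat.pos_of_ne_zero hn)] at this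
  obtain ⟨m, hm, hmS⟩ := (all_card_le_biUnion_card_iff_exists_injective _).1 hall
  have hm' : Bijective m := Finite.injective_iff_bijective.1 hm
  simp only [mem_image, mem_filter] at hmS
  choose x hx using hmS
  have hxs : LeftInverse s x := fun b => (hx b).1.2
  refine ⟨univ.image x, image_subset_iff.2 fun b _ => (hx b).1.1, fun b => ?_, fun b => ?_⟩
  all_goals rw [filter_image, card_image_of_injective _ hxs.injective, card_eq_one]
  · exact ⟨b, by ext; simp [hxs _]⟩
  · obtain ⟨b, rfl⟩ := hm'.2 b
    exact ⟨b, by ext; simp [(hx _).2, hm.eq_iff]⟩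

lemma card_filter_sdiff_eq [DecidableEq α] (hs : ∀ b, #{x ∈ S | s x = b} = n + 1) (hMS : M ⊆ S)
    (hMs : ∀ b, #{x ∈ M | s x = b} = 1) (b : β) : #{x ∈ S \ M | s x = b} = n := by
  have hsdiff : {x ∈ S \ M | s x = b} = {x ∈ S | s x = b} \ {x ∈ M | s x = b} := by
    ext; simp only [mem_filter, mem_sdiff]; tauto
  rw [hsdiff, card_sdiff_of_subset (filter_subset_filter _ hMS), hs, hMs, Nat.add_sub_cancel]

lemma injOn_ite_mem [DecidableEq α] {c : α → ℕ} (hMs : ∀ b, #{x ∈ M | s x = b} = 1)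
    (hc : Set.InjOn (fun x => (c x, s x)) ↑(S \ M)) (hlt : ∀ x ∈ S \ M, c x < n) :
    Set.InjOn (fun x => (if x ∈ M then n else c x, s x)) S := by
  intro x hx y hy hxy
  simp only [Prod.mk.injEq] at hxy
  obtain ⟨hcxy, hsxy⟩ := hxy
  split_ifs at hcxy with hxM hyM hyM
  · exact card_le_one.1 (hMs (s x)).le x (mem_filter.2 ⟨hxM, rfl⟩) y
      (mem_filter.2 ⟨hyM, hsxy.symm⟩)
  · exact absurd hcxy (hlt y (mem_sdiff.2 ⟨hy, hyM⟩)).ne'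
  · exact absurd hcxy (hlt x (mem_sdiff.2 ⟨hx, hxM⟩)).ne
  · exact hc (mem_sdiff.2 ⟨hx, hxM⟩) (mem_sdiff.2 ⟨hy, hyM⟩) (Prod.ext hcxy hsxy)

/-- König's edge-colouring theorem for regular bipartite multigraphs. -/
theorem exists_edgeColouring_of_regular [Fintype β] (hs : ∀ b, #{x ∈ S | s x = b} = n)
    (ht : ∀ b, #{x ∈ S | t x = b} = n) :
    ∃ c : α → ℕ, (∀ x ∈ S, c x < n) ∧ Set.InjOn (fun x => (c x, s x)) S ∧
      Set.InjOn (fun x => (c x, t x)) S := by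
  classical
  induction n generalizing S with
  | zero =>
    obtain rfl : S = ∅ := eq_empty_of_forall_notMem fun x hx =>
      (card_pos.2 ⟨x, mem_filter.2 ⟨hx, rfl⟩⟩ : 0 < #{y ∈ S | s y = s x}).ne' (hs (s x))
    exact ⟨0, by simp, by simp, by simp⟩
  | succ n ih =>
    obtain ⟨M, hMS, hMs, hMt⟩ := exists_perfectMatching_of_regular n.succ_ne_zero hs ht
    obtain ⟨c, hlt, hcs, hct⟩ :=
      ih (card_filter_sdiff_eq hs hMS hMs) (card_filter_sdiff_eq ht hMS hMt)
    refine ⟨fun x => if x ∈ M then n else c x, fun x hx => ?_, injOn_ite_mem hMs hcs hlt,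
      injOn_ite_mem hMt hct hlt⟩
    dsimp only
    split_ifs with hxM
    · exact n.lt_succ_self
    · exact (hlt x (mem_sdiff.2 ⟨hx, hxM⟩)).trans n.lt_succ_self

end EdgeColouring

section ProductPermutations

open Finset

variable {V W : Type*}

lemma exists_prodCongrLeft_eq [Finite V] {π : Perm (V × W)} (h : ∀ p, (π p).2 = p.2) :
    ∃ e : W → Perm V, prodCongrLeft e = π := by
  have hinj (w : W) : Injective fun v => (π (v, w)).1 := fun v v' hvv' => by
    simpa using π.injective (Prod.ext hvv' ((h (v, w)).trans (h (v', w)).symm))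
  refine ⟨fun w => .ofBijective _ (Finite.injective_iff_bijective.1 (hinj w)), ?_⟩
  ext ⟨v, w⟩ <;> simp [h]

lemma exists_prodCongrRight_eq [Finite W] {π : Perm (V × W)} (h : ∀ p, (π p).1 = p.1) :
    ∃ e : V → Perm W, prodCongrRight e = π := by
  have hinj (v : V) : Injective fun w => (π (v, w)).2 := fun w w' hww' => by
    simpa using π.injective (Prod.ext ((h (v, w)).trans (h (v, w')).symm) hww')
  refine ⟨fun v => .ofBijective _ (Finite.injective_iff_bijective.1 (hinj v)), ?_⟩
  ext ⟨v, w⟩ <;> simp [h]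

variable [Fintype V] [Fintype W]

lemma exists_colouring_prod (τ : Perm (V × W)) :
    ∃ f : V × W → V, Injective (fun p => (f p, p.2)) ∧ Injective (fun p => (f p, (τ p).2)) := by
  classical
  have hcol (w : W) : #{p : V × W | p.2 = w} = Fintype.card V := by
    rw [← card_univ, ← card_map (s := univ) ⟨fun v => (v, w), Prod.mk_left_injective w⟩]
    refine congrArg card (ext fun p => ?_)
    simp [Prod.ext_iff, eq_comm]
  have htgt (w : W) : #{p : V × W | (τ p).2 = w} = Fintype.card V :=
    (card_equiv τ fun p => by simp).trans (hcol w)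
  obtain ⟨c, hlt, hc₁, hc₂⟩ := exists_edgeColouring_of_regular hcol htgt
  let f (p : V × W) : V := (Fintype.equivFin V).symm ⟨c p, hlt p (mem_univ p)⟩
  have hf {p q : V × W} (h : f p = f q) : c p = c q := by
    simpa using congrArg Fin.val ((Fintype.equivFin V).symm.injective h)
  refine ⟨f, fun p q h => hc₁ (by simp) (by simp) ?_, fun p q h => hc₂ (by simp) (by simp) ?_⟩
  all_goals exact Prod.ext (hf (Prod.ext_iff.1 h).1) (Prod.ext_iff.1 h).2

theorem exists_eq_prodCongrLeft_mul_prodCongrRight_mul_prodCongrLeft (τ : Perm (V × W)) :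
    ∃ (e₁ e₃ : W → Perm V) (e₂ : V → Perm W),
      τ = prodCongrLeft e₃ * prodCongrRight e₂ * prodCongrLeft e₁ := by
  obtain ⟨f, hf₁, hf₂⟩ := exists_colouring_prod τ
  -- `π₁` recolours each column; `ρ` moves every pebble to its target column, keeping its colour
  let π₁ : Perm (V × W) := .ofBijective _ (Finite.injective_iff_bijective.1 hf₁)
  let ρ : Perm (V × W) := .ofBijective _ (Finite.injective_iff_bijective.1 hf₂)
  obtain ⟨e₁, he₁⟩ := exists_prodCongrLeft_eq (π := π₁) fun p => rfl
  obtain ⟨e₂, he₂⟩ := exists_prodCongrRight_eq (π := ρ * π₁⁻¹) fun p => by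
    have := congrArg Prod.fst (π₁.apply_symm_apply p); exact this
  obtain ⟨e₃, he₃⟩ := exists_prodCongrLeft_eq (π := τ * ρ⁻¹) fun p => by
    have := congrArg Prod.snd (ρ.apply_symm_apply p); exact this
  exact ⟨e₁, e₃, e₂, by rw [he₁, he₂, he₃]; group⟩

end ProductPermutations

theorem RoutableIn.boxProd {V W : Type*} [Fintype V] [Fintype W] {G : SimpleGraph V}
    {H : SimpleGraph W} {a b : ℕ} (hG : RoutableIn G a) (hH : RoutableIn H b) :
    RoutableIn (G □ H) (2 * a + b) := by
  rw [routableIn_iff_forall_routesIn] at *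
  intro τ
  obtain ⟨e₁, e₃, e₂, rfl⟩ := exists_eq_prodCongrLeft_mul_prodCongrRight_mul_prodCongrLeft τ
  have h := ((routesIn_prodCongrLeft (H := H) fun w => hG (e₃ w)).mul
    (routesIn_prodCongrRight (G := G) fun v => hH (e₂ v))).mul
    (routesIn_prodCongrLeft (H := H) fun w => hG (e₁ w))
  exact h.mono (by omega)

theorem stmt_12 {V W : Type*} [Fintype V] [Fintype W]
    (G : SimpleGraph V) (H : SimpleGraph W) :
    routingNumber (G.boxProd H) ≤ 2 * routingNumber G + routingNumber H := by
  rcases isEmpty_or_nonempty (V × W) with hVW | hVW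
  · have h : RoutableIn (G □ H) 0 := fun τ => ⟨finZeroElim, finZeroElim, isEmptyElim⟩
    exact (Nat.sInf_le h).trans (Nat.zero_le _)
  obtain ⟨k, hk⟩ | hnone := em (∃ k, RoutableIn (G □ H) k)
  · obtain ⟨hGc, hHc⟩ := SimpleGraph.connected_boxProd.1 ⟨hk.preconnected⟩
    exact Nat.sInf_le ((routableIn_routingNumber hGc.preconnected).boxProd
      (routableIn_routingNumber hHc.preconnected))
  · simp [routingNumber, not_exists.1 hnone]
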